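/- Let K and L be mutually dual closed convex cones in a real Hilbert space H and suppose P_K is K-isotone. Then for all x, y ∈ H, P_K(x + y) ≤_L P_K(x) + P_K(y), i.e., P_K(x) + P_K(y) − P_K(x+y) ∈ L. -/

import Mathlib

/-!
The potential `φ v = ⟪v, P_K v⟫ - ‖P_K v‖² / 2 = (‖v‖² - dist(v, K)²) / 2` has gradient `P_K`, so
the derivative of `P_K` is symmetric and `K`-isotonicity transposes to `L`-isotonicity. Concretely,
`K`-isotonicity makes the mixed second differences of `φ` in directions `c ∈ K` and `l ∈ L`
nonnegative (summing over a fine subdivision of the segment along `l`, with the nonexpansiveness of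
`P_K` controlling the error), and reading the same mixed difference as an increment in the direction
`c` shows that `P_K` is `L`-isotone. Since `l = P_K x + P_K y - (x + y) ∈ L` by Moreau's decomposition and
`P_K (x + y + l) = P_K x + P_K y`, this gives the claim.
-/

open RealInnerProductSpace

variable {H : Type*} [NormedAddCommGroup H] [InnerProductSpace ℝ H] [CompleteSpace H]

/-- `K` is a closed convex cone (containing `0`). -/
def IsClosedConvexCone (K : Set H) : Prop :=
  IsClosed K ∧ (0 : H) ∈ K ∧ (∀ x ∈ K, ∀ y ∈ K, x + y ∈ K) ∧
    ∀ x ∈ K, ∀ t : ℝ, 0 ≤ t → t • x ∈ K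

/-- The dual cone of a set. -/
def dualSet (K : Set H) : Set H := {y | ∀ x ∈ K, 0 ≤ ⟪x, y⟫}

/-- `P` is the metric projection onto `D`. -/
def IsMetricProj (D : Set H) (P : H → H) : Prop :=
  ∀ x, P x ∈ D ∧ ∀ y ∈ D, ‖x - P x‖ ≤ ‖x - y‖

/-- The translate `x - K`. -/
def meetSet (K : Set H) (x : H) : Set H := {z | ∃ k ∈ K, z = x - k}

/-- The translate `x + K`. -/
def joinSet (K : Set H) (x : H) : Set H := {z | ∃ k ∈ K, z = x + k}

open Filter Topology

theorem monotone_of_forall_sub_mul_sq_le {f : ℝ → ℝ} {C : ℝ}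
    (h : ∀ s t, s ≤ t → f s - C * (t - s) ^ 2 ≤ f t) : Monotone f := by
  intro a b hab
  have hstep : ∀ n : ℕ, 0 < n → f a - C * (b - a) ^ 2 / n ≤ f b := by
    intro n hn
    have hn' : (0 : ℝ) < n := Nat.cast_pos.mpr hn
    set d := (b - a) / n with hd
    have hd0 : 0 ≤ d := div_nonneg (sub_nonneg.mpr hab) hn'.le
    have hind : ∀ i : ℕ, f a - i * (C * d ^ 2) ≤ f (a + i * d) := by
      intro i
      induction i with
      | zero => simp
      | succ i ih =>
        have := h (a + i * d) (a + (i + 1 : ℕ) * d) (by push_cast; linarith)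
        push_cast at this ⊢
        nlinarith
    have hb : a + n * d = b := by rw [hd]; field_simp; ring
    have hC : (n : ℝ) * (C * d ^ 2) = C * (b - a) ^ 2 / n := by rw [hd]; field_simp
    simpa [hb, hC] using hind n
  have hlim : Tendsto (fun n : ℕ => f a - C * (b - a) ^ 2 / n) atTop (𝓝 (f a)) := by
    simpa using (tendsto_const_div_atTop_nhds_zero_nat (C * (b - a) ^ 2)).const_sub (f a)
  exact le_of_tendsto hlim (eventually_atTop.mpr ⟨1, fun n hn => hstep n hn⟩)

theorem nonneg_of_forall_pos_nonneg_add_mul {a c : ℝ} (h : ∀ t > 0, 0 ≤ a + t * c) : 0 ≤ a := by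
  have hlim : Tendsto (fun t => a + t * c) (𝓝[>] 0) (𝓝 a) := by
    have : Tendsto (fun t => a + t * c) (𝓝 0) (𝓝 (a + 0 * c)) :=
      (continuous_const.add (continuous_id.mul continuous_const)).tendsto 0
    simpa using this.mono_left nhdsWithin_le_nhds
  exact ge_of_tendsto hlim (eventually_nhdsWithin_of_forall h)

section

variable {E : Type*} [NormedAddCommGroup E]

theorem IsMetricProj.apply_of_mem {D : Set E} {P : E → E} (hP : IsMetricProj D P) {x : E}
    (hx : x ∈ D) : P x = x := by
  have h := (hP x).2 x hx
  rw [sub_self, norm_zero, norm_le_zero_iff, sub_eq_zero] at h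
  exact h.symm

def IsConeIsotone (K : Set E) (P : E → E) : Prop :=
  ∀ u v, v - u ∈ K → P v - P u ∈ K

variable [InnerProductSpace ℝ E]

theorem IsClosedConvexCone.convex {K : Set E} (hK : IsClosedConvexCone K) : Convex ℝ K := by
  obtain ⟨-, -, hadd, hsmul⟩ := hK
  intro x hx y hy a b ha hb _
  exact hadd _ (hsmul x hx a ha) _ (hsmul y hy b hb)

theorem add_mem_dualSet {K : Set E} {u v : E} (hu : u ∈ dualSet K) (hv : v ∈ dualSet K) :
    u + v ∈ dualSet K := fun k hk => by
  rw [inner_add_right]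
  exact add_nonneg (hu k hk) (hv k hk)

theorem smul_mem_dualSet {K : Set E} {u : E} (hu : u ∈ dualSet K) {t : ℝ} (ht : 0 ≤ t) :
    t • u ∈ dualSet K := fun k hk => by
  rw [real_inner_smul_right]
  exact mul_nonneg ht (hu k hk)

noncomputable def projPotential (P : E → E) (v : E) : ℝ := ⟪v, P v⟫ - ‖P v‖ ^ 2 / 2

namespace IsMetricProj

variable {D : Set E} {P : E → E}

theorem inner_sub_le_zero (hD : Convex ℝ D) (hP : IsMetricProj D P) (x : E) {y : E}
    (hy : y ∈ D) : ⟪x - P x, y - P x⟫ ≤ 0 := by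
  have hmin : ‖x - P x‖ = ⨅ w : D, ‖x - w‖ :=
    have : Nonempty D := ⟨⟨y, hy⟩⟩
    le_antisymm (le_ciInf fun w => (hP x).2 w w.2)
      (ciInf_le ⟨0, Set.forall_mem_range.2 fun _ => norm_nonneg _⟩ (⟨P x, (hP x).1⟩ : D))
  exact (norm_eq_iInf_iff_real_inner_le_zero hD (hP x).1).mp hmin y hy

theorem norm_sub_le (hD : Convex ℝ D) (hP : IsMetricProj D P) (a b : E) :
    ‖P b - P a‖ ≤ ‖b - a‖ := by
  have ha := hP.inner_sub_le_zero hD a (hP b).1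
  have hb := hP.inner_sub_le_zero hD b (hP a).1
  have firm : ‖P b - P a‖ ^ 2 ≤ ⟪b - a, P b - P a⟫ := by
    have e1 : b - a = (b - P b) - (a - P a) + (P b - P a) := by abel
    have e2 : ⟪b - P b, P a - P b⟫ = -⟪b - P b, P b - P a⟫ := by rw [← inner_neg_right, neg_sub]
    rw [e1, inner_add_left, inner_sub_left, real_inner_self_eq_norm_sq]
    linarith
  nlinarith [real_inner_le_norm (b - a) (P b - P a), norm_nonneg (b - a), norm_nonneg (P b - P a)]

theorem inner_le_projPotential_sub (hP : IsMetricProj D P) (a b : E) :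
    ⟪b - a, P a⟫ ≤ projPotential P b - projPotential P a := by
  have h := pow_le_pow_left₀ (norm_nonneg _) ((hP b).2 (P a) (hP a).1) 2
  rw [norm_sub_sq_real, norm_sub_sq_real] at h
  rw [inner_sub_left]
  unfold projPotential
  linarith

variable {K : Set E}

theorem apply_sub_mem_dualSet (hK : IsClosedConvexCone K) (hP : IsMetricProj K P)
    (z : E) : P z - z ∈ dualSet K := fun c hc => by
  have h := hP.inner_sub_le_zero hK.convex z (hK.2.2.1 c hc _ (hP z).1)
  rw [add_sub_cancel_right, real_inner_comm, ← neg_sub, inner_neg_right] at h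
  linarith

theorem projPotential_sub_sub_norm_sq_le (hK : IsClosedConvexCone K) (hP : IsMetricProj K P)
    (hiso : IsConeIsotone K P) {c δ : E} (hc : c ∈ K) (hδ : δ ∈ dualSet K) (w : E) :
    projPotential P (w + c) - projPotential P w - ‖δ‖ ^ 2 ≤
      projPotential P (w + δ + c) - projPotential P (w + δ) := by
  have h₁ := hP.inner_le_projPotential_sub (w + c) (w + δ + c)
  have h₂ := hP.inner_le_projPotential_sub (w + δ) w
  rw [add_sub_add_right_eq_sub, add_sub_cancel_left] at h₁
  rw [sub_add_cancel_left, inner_neg_left] at h₂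
  have hcone : 0 ≤ ⟪δ, P (w + c) - P w⟫ := by
    rw [real_inner_comm]
    exact hδ _ (hiso w (w + c) (by rwa [add_sub_cancel_left]))
  have hnonexp : ⟪δ, P (w + δ) - P w⟫ ≤ ‖δ‖ ^ 2 := by
    calc _ ≤ ‖δ‖ * ‖P (w + δ) - P w‖ := real_inner_le_norm _ _
      _ ≤ ‖δ‖ * ‖δ‖ := by
        gcongr
        simpa using hP.norm_sub_le hK.convex w (w + δ)
      _ = ‖δ‖ ^ 2 := (sq _).symm
  rw [inner_sub_right] at hcone hnonexp
  linarith

theorem monotone_projPotential_sub (hK : IsClosedConvexCone K) (hP : IsMetricProj K P)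
    (hiso : IsConeIsotone K P) {c l : E} (hc : c ∈ K) (hl : l ∈ dualSet K) (z : E) :
    Monotone fun s : ℝ => projPotential P (z + s • l + c) - projPotential P (z + s • l) := by
  refine monotone_of_forall_sub_mul_sq_le (C := ‖l‖ ^ 2) fun s t hst => ?_
  have h := hP.projPotential_sub_sub_norm_sq_le hK hiso hc
    (smul_mem_dualSet hl (sub_nonneg.mpr hst)) (z + s • l)
  have e : z + s • l + (t - s) • l = z + t • l := by rw [add_assoc, ← add_smul, add_sub_cancel]
  rw [e, norm_smul, mul_pow, Real.norm_eq_abs, sq_abs] at h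
  linarith

theorem isConeIsotone_dualSet (hK : IsClosedConvexCone K) (hP : IsMetricProj K P)
    (hiso : IsConeIsotone K P) : IsConeIsotone (dualSet K) P := by
  intro u v huv k hk
  -- The mixed difference of `projPotential P` in the directions `v - u` and `t • k` is nonnegative,
  -- and the gradient inequalities bound it by `t * (⟪k, P v - P u⟫ + t * ‖k‖ ^ 2)`.
  refine nonneg_of_forall_pos_nonneg_add_mul (c := ‖k‖ ^ 2) fun t ht => ?_
  have hmixed := hP.monotone_projPotential_sub hK hiso (hK.2.2.2 k hk t ht.le) huv u zero_le_one
  simp only [zero_smul, add_zero, one_smul, add_sub_cancel] at hmixed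
  have hu := hP.inner_le_projPotential_sub u (u + t • k)
  have hv := hP.inner_le_projPotential_sub (v + t • k) v
  rw [add_sub_cancel_left, real_inner_smul_left] at hu
  rw [sub_add_cancel_left, inner_neg_left, real_inner_smul_left] at hv
  have hnonexp : ⟪k, P (v + t • k) - P v⟫ ≤ t * ‖k‖ ^ 2 := by
    calc _ ≤ ‖k‖ * ‖P (v + t • k) - P v‖ := real_inner_le_norm _ _
      _ ≤ ‖k‖ * (t * ‖k‖) := by
        gcongr
        simpa [norm_smul, abs_of_pos ht] using hP.norm_sub_le hK.convex v (v + t • k)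
      _ = t * ‖k‖ ^ 2 := by ring
  have hscaled : 0 ≤ t * (⟪k, P v - P u⟫ + ⟪k, P (v + t • k) - P v⟫) := by
    rw [← inner_add_right, sub_add_sub_cancel', inner_sub_right, mul_sub]
    linarith
  nlinarith

end IsMetricProj

end

theorem K_isotone_implies_L_subadditive_general (K L : Set H) (hK : IsClosedConvexCone K)
    (hL : L = dualSet K)
    (PK : H → H) (hPK : IsMetricProj K PK)
    (hiso : ∀ u v : H, v - u ∈ K → PK v - PK u ∈ K) :
    ∀ x y : H, PK x + PK y - PK (x + y) ∈ L := by
  intro x y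
  subst hL
  have hl : PK x + PK y - (x + y) ∈ dualSet K := by
    rw [add_sub_add_comm]
    exact add_mem_dualSet (hPK.apply_sub_mem_dualSet hK x) (hPK.apply_sub_mem_dualSet hK y)
  have hfix : PK (PK x + PK y) = PK x + PK y := hPK.apply_of_mem (hK.2.2.1 _ (hPK x).1 _ (hPK y).1)
  simpa [hfix] using hPK.isConeIsotone_dualSet hK hiso (x + y) (PK x + PK y) hl

theorem K_isotone_implies_L_subadditive (K L : Set H) (hK : IsClosedConvexCone K)
    (hL : L = dualSet K) (hKL : K = dualSet L)
    (PK : H → H) (hPK : IsMetricProj K PK)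
    (hiso : ∀ u v : H, v - u ∈ K → PK v - PK u ∈ K) :
    ∀ x y : H, PK x + PK y - PK (x + y) ∈ L :=
  K_isotone_implies_L_subadditive_general K L hK hL PK hPK hiso
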